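/- Let N(λ) denote the number of triples (ℓ,m,n) of positive integers with ℓ²+m²+n² < λ. Then N(λ) ≤ (π/6)λ^{3/2} for all λ > 0. -/

import Mathlib

/-!
For every positive lattice point `p` with `‖p‖² < λ`, the open unit cube `∏ (pᵢ - 1, pᵢ)`
lies in the ball of radius `√λ`, and so do its `8` reflections in the coordinate hyperplanes.
These `8 N(λ)` cubes are pairwise disjoint with volume `1` each, hence
`8 N(λ) ≤ (4/3) π λ^{3/2}`.
-/

open Real MeasureTheory Set

namespace LatticePointCount

variable {ι : Type*}

def unitCube (z : ι → ℤ) : Set (ι → ℝ) :=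
  univ.pi fun i => Ioo (z i : ℝ) (z i + 1)

theorem pairwise_disjoint_unitCube :
    Pairwise (Function.onFun Disjoint (unitCube : (ι → ℤ) → Set (ι → ℝ))) := by
  intro z w hzw
  obtain ⟨i, hi⟩ := Function.ne_iff.mp hzw
  exact disjoint_univ_pi.mpr ⟨i, pairwise_disjoint_Ioo_intCast ℝ hi⟩

/-- Lower corner of the cube `∏ (p i - 1, p i)` after the reflections `x i ↦ -x i` for the
`i` with `s i = false`. -/
def signedCorner (s : ι → Bool) (p : ι → ℕ) : ι → ℤ :=
  fun i => if s i then (p i : ℤ) - 1 else -(p i : ℤ)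

theorem abs_lt_of_mem_unitCube_signedCorner {s : ι → Bool} {p : ι → ℕ}
    (hp : ∀ i, 1 ≤ p i) {x : ι → ℝ} (hx : x ∈ unitCube (signedCorner s p)) (i : ι) :
    |x i| < p i := by
  have hpi : (1 : ℝ) ≤ p i := by exact_mod_cast hp i
  have hxi := hx i (mem_univ i)
  by_cases hs : s i <;> simp only [signedCorner, hs, if_true, if_false, Bool.false_eq_true,
    Int.cast_sub, Int.cast_neg, Int.cast_natCast, Int.cast_one, mem_Ioo] at hxi <;>
    rw [abs_lt] <;> constructor <;> linarith [hxi.1, hxi.2]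

theorem signedCorner_injOn :
    InjOn (fun sp : (ι → Bool) × (ι → ℕ) => signedCorner sp.1 sp.2)
      (univ ×ˢ {p | ∀ i, 1 ≤ p i}) := by
  rintro ⟨s, p⟩ ⟨-, hp⟩ ⟨s', p'⟩ ⟨-, hp'⟩ h
  have hcoord (i : ι) : s i = s' i ∧ p i = p' i := by
    have hi := congrFun h i
    have h1 : 1 ≤ p i := hp i
    have h2 : 1 ≤ p' i := hp' i
    revert hi
    simp only [signedCorner]
    cases s i <;> cases s' i <;> simp <;> omega
  exact Prod.ext (funext fun i => (hcoord i).1) (funext fun i => (hcoord i).2)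

variable [Fintype ι]

theorem volume_unitCube (z : ι → ℤ) : volume (unitCube z) = 1 := by
  simp [unitCube, volume_pi_Ioo]

theorem measurableSet_unitCube (z : ι → ℤ) : MeasurableSet (unitCube z) :=
  MeasurableSet.univ_pi fun _ => measurableSet_Ioo

theorem card_le_volume_of_unitCube_subset (Z : Finset (ι → ℤ)) {B : Set (ι → ℝ)}
    (hZ : ∀ z ∈ Z, unitCube z ⊆ B) : (Z.card : ENNReal) ≤ volume B :=
  calc (Z.card : ENNReal) = ∑ z ∈ Z, volume (unitCube z) := by simp [volume_unitCube]
    _ = volume (⋃ z ∈ Z, unitCube z) :=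
      (measure_biUnion_finset (pairwise_disjoint_unitCube.set_pairwise _)
        fun z _ => measurableSet_unitCube z).symm
    _ ≤ volume B := measure_mono (iUnion₂_subset hZ)

variable (ι) in
def positiveLatticePoints (lam : ℝ) : Set (ι → ℕ) :=
  {p | (∀ i, 1 ≤ p i) ∧ ∑ i, (p i : ℝ) ^ 2 < lam}

theorem positiveLatticePoints_finite (lam : ℝ) : (positiveLatticePoints ι lam).Finite := by
  refine (Finite.pi' fun _ => finite_Iio ⌈lam⌉₊).subset ?_
  rintro p ⟨hp, hsum⟩ i
  have hpi : (1 : ℝ) ≤ p i := by exact_mod_cast hp i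
  have : (p i : ℝ) ^ 2 ≤ ∑ j, (p j : ℝ) ^ 2 :=
    Finset.single_le_sum (f := fun j => (p j : ℝ) ^ 2) (fun j _ => sq_nonneg _)
      (Finset.mem_univ i)
  exact Nat.lt_ceil.mpr (by nlinarith)

theorem two_pow_mul_card_le_volume (lam : ℝ) :
    ((2 ^ Fintype.card ι * Nat.card (positiveLatticePoints ι lam) : ℕ) : ENNReal) ≤
      volume {x : ι → ℝ | ∑ i, x i ^ 2 < lam} := by
  classical
  set A := (positiveLatticePoints_finite (ι := ι) lam).toFinset
  have hcard : ((Finset.univ : Finset (ι → Bool)) ×ˢ A).card =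
      2 ^ Fintype.card ι * Nat.card (positiveLatticePoints ι lam) := by
    rw [Finset.card_product, Finset.card_univ, Fintype.card_fun, Fintype.card_bool,
      Nat.card_eq_card_finite_toFinset (positiveLatticePoints_finite lam)]
  rw [← hcard, ← Finset.card_image_of_injOn (f := fun sp => signedCorner sp.1 sp.2) ?inj]
  case inj =>
    refine signedCorner_injOn.mono ?_
    simp only [Finset.coe_product, Finset.coe_univ, A, Finite.coe_toFinset]
    exact prod_mono subset_rfl fun p hp => hp.1
  refine card_le_volume_of_unitCube_subset _ ?_
  simp only [Finset.mem_image, Finset.mem_product, Finset.mem_univ, true_and, A,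
    Finite.mem_toFinset, Prod.exists, forall_exists_index, and_imp]
  rintro _ s p ⟨hp, hsum⟩ rfl x hx
  refine lt_of_le_of_lt (Finset.sum_le_sum fun i _ => ?_) hsum
  have hxi := abs_lt.mp (abs_lt_of_mem_unitCube_signedCorner hp hx i)
  exact sq_le_sq' hxi.1.le hxi.2.le

theorem volume_sum_sq_lt_sq {r : ℝ} (hr : 0 ≤ r) :
    volume {x : ι → ℝ | ∑ i, x i ^ 2 < r ^ 2} =
      volume (Metric.ball (0 : EuclideanSpace ℝ ι) r) := by
  rw [EuclideanSpace.ball_zero_eq r hr, ← (PiLp.volume_preserving_toLp ι).measure_preimage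
    (measurableSet_lt (by fun_prop) measurable_const).nullMeasurableSet]
  rfl

theorem volume_sum_sq_lt_fin_three {lam : ℝ} (hlam : 0 ≤ lam) :
    volume {x : Fin 3 → ℝ | ∑ i, x i ^ 2 < lam} =
      ENNReal.ofReal (π * 4 / 3 * lam ^ (3 / 2 : ℝ)) := by
  have hsqrt : lam ^ (3 / 2 : ℝ) = √lam ^ 3 := by
    rw [sqrt_eq_rpow, ← rpow_natCast, ← rpow_mul hlam]
    norm_num
  rw [← sq_sqrt hlam, volume_sum_sq_lt_sq (sqrt_nonneg lam),
    EuclideanSpace.volume_ball_fin_three, sq_sqrt hlam, hsqrt,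
    ← ENNReal.ofReal_pow (sqrt_nonneg lam), ← ENNReal.ofReal_mul (by positivity), mul_comm]

end LatticePointCount

open LatticePointCount

theorem counting_function_upper_bound (lam : ℝ) (hlam : 0 < lam) :
    (Nat.card {p : ℕ × ℕ × ℕ // 1 ≤ p.1 ∧ 1 ≤ p.2.1 ∧ 1 ≤ p.2.2 ∧
        ((p.1 : ℝ)^2 + (p.2.1 : ℝ)^2 + (p.2.2 : ℝ)^2) < lam} : ℝ)
      ≤ π / 6 * lam ^ ((3 : ℝ) / 2) := by
  have hcard : Nat.card {p : ℕ × ℕ × ℕ // 1 ≤ p.1 ∧ 1 ≤ p.2.1 ∧ 1 ≤ p.2.2 ∧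
      ((p.1 : ℝ)^2 + (p.2.1 : ℝ)^2 + (p.2.2 : ℝ)^2) < lam} =
        Nat.card (positiveLatticePoints (Fin 3) lam) :=
    Nat.card_congr <| Equiv.subtypeEquiv
      (((Equiv.refl ℕ).prodCongr (finTwoArrowEquiv ℕ).symm).trans (Fin.consEquiv fun _ => ℕ))
      fun p => by
        simp [positiveLatticePoints, Fin.forall_fin_succ, Fin.sum_univ_succ, add_assoc, and_assoc]
  have h := ENNReal.toReal_le_of_le_ofReal (by positivity)
    ((two_pow_mul_card_le_volume (ι := Fin 3) lam).trans_eq (volume_sum_sq_lt_fin_three hlam.le))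
  rw [ENNReal.toReal_natCast, ← hcard] at h
  push_cast [Fintype.card_fin] at h
  linarith
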